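/- For a Hermitian matrix h with eigenvalues ε_j, β > 0 and t ≥ 0, the trace norm bound (1/2)‖(i/2)tanh(2βh)·e^{−4q(4h)²cosh(2βh)t}‖_Tr = ∑_j (1/4)|tanh(2βε_j)|·e^{−4q(4ε_j)²cosh(2βε_j)t} ≤ (n/2)·tanh(2β‖h‖)·e^{−4(min_j q(4ε_j)²cosh(2βε_j))t} holds, where n is the dimension and ‖h‖ the operator norm. -/

import Mathlib

open Real Finset

theorem Real.tanh_monotone : Monotone tanh := by
  intro x y hxy
  by_contra! hlt
  have h := artanh_lt_artanh (neg_one_lt_tanh y) (tanh_lt_one x) hlt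
  rw [artanh_tanh, artanh_tanh] at h
  exact hxy.not_gt h

theorem Real.abs_tanh_le_tanh_of_abs_le {x y : ℝ} (h : |x| ≤ y) : |tanh x| ≤ tanh y := by
  obtain ⟨hlo, hhi⟩ := abs_le.mp h
  refine abs_le.mpr ⟨?_, tanh_monotone hhi⟩
  simpa only [tanh_neg] using tanh_monotone hlo

theorem Complex.norm_I_div_two_mul_ofReal_mul_ofReal (a b : ℝ) :
    ‖Complex.I / 2 * (a : ℂ) * (b : ℂ)‖ = |a| * |b| / 2 := by
  rw [norm_mul, norm_mul, norm_div, Complex.norm_I, Complex.norm_real, Complex.norm_real,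
    Real.norm_eq_abs, Real.norm_eq_abs, Complex.norm_ofNat]
  ring

theorem Finset.sum_mul_le_card_mul {ι : Type*} [Fintype ι] {a b : ι → ℝ} {A B : ℝ}
    (ha₀ : ∀ i, 0 ≤ a i) (ha : ∀ i, a i ≤ A) (hb₀ : ∀ i, 0 ≤ b i) (hb : ∀ i, b i ≤ B) :
    ∑ i, a i * b i ≤ Fintype.card ι * (A * B) := by
  -- `ι` may be empty, so `0 ≤ A` is only available at an index
  have hA : ∀ i, 0 ≤ A := fun i => (ha₀ i).trans (ha i)
  calc ∑ i, a i * b i ≤ ∑ _i : ι, A * B :=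
        sum_le_sum fun i _ => mul_le_mul (ha i) (hb i) (hb₀ i) (hA i)
    _ = Fintype.card ι * (A * B) := by rw [sum_const, card_univ, nsmul_eq_mul]

theorem trace_norm_mixing_bound_general {n : ℕ} (β t : ℝ) (hβ : 0 < β) (ht : 0 ≤ t)
    (q : ℝ → ℝ)
    (ε : Fin n → ℝ)
    -- `hnorm = ‖h‖` is the largest absolute value of an eigenvalue
    (hnorm : ℝ) (hnorm_ge : ∀ j, |ε j| ≤ hnorm)
    -- `m = min_j q(4ε_j)² cosh(2βε_j)`
    (m : ℝ) (hm_le : ∀ j, m ≤ q (4 * ε j) ^ 2 * Real.cosh (2 * β * ε j))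
    -- `τX = ‖X‖_Tr`: the trace norm of `X`, i.e. the sum of the absolute values of the
    -- eigenvalues `(i/2)tanh(2βε_j)e^{−4q(4ε_j)²cosh(2βε_j)t}` of the normal matrix `X`
    (τX : ℝ)
    (hτ : τX = ∑ j, ‖(Complex.I / 2) * (Real.tanh (2 * β * ε j) : ℂ) *
        (Real.exp (-4 * q (4 * ε j) ^ 2 * Real.cosh (2 * β * ε j) * t) : ℂ)‖) :
    (1 / 2) * τX
        = ∑ j, (1 / 4) * |Real.tanh (2 * β * ε j)| *
            Real.exp (-4 * q (4 * ε j) ^ 2 * Real.cosh (2 * β * ε j) * t)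
    ∧ (1 / 2) * τX
        ≤ (n / 2) * Real.tanh (2 * β * hnorm) * Real.exp (-4 * m * t) := by
  set a : Fin n → ℝ := fun j => |tanh (2 * β * ε j)|
  set b : Fin n → ℝ := fun j => exp (-4 * q (4 * ε j) ^ 2 * cosh (2 * β * ε j) * t)
  have hsum : (1 / 2) * τX = ∑ j, (1 / 4) * a j * b j := by
    rw [hτ, mul_sum]
    refine sum_congr rfl fun j _ => ?_
    rw [Complex.norm_I_div_two_mul_ofReal_mul_ofReal, abs_of_pos (exp_pos _)]
    ring
  have ha : ∀ j, a j ≤ tanh (2 * β * hnorm) := fun j => abs_tanh_le_tanh_of_abs_le <| by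
    rw [abs_mul, abs_of_pos (by positivity : 0 < 2 * β)]
    exact mul_le_mul_of_nonneg_left (hnorm_ge j) (by positivity)
  have hb : ∀ j, b j ≤ exp (-4 * m * t) := fun j => exp_le_exp.mpr <| by
    nlinarith [mul_nonneg (sub_nonneg.mpr (hm_le j)) ht]
  have hbound := sum_mul_le_card_mul (fun _ => abs_nonneg _) ha (fun _ => (exp_pos _).le) hb
  have hnonneg : 0 ≤ ∑ j, a j * b j :=
    sum_nonneg fun j _ => mul_nonneg (abs_nonneg _) (exp_pos _).le
  have hfactor : ∑ j, (1 / 4) * a j * b j = (1 / 4) * ∑ j, a j * b j := by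
    rw [mul_sum]; simp only [mul_assoc]
  refine ⟨hsum, ?_⟩
  rw [hsum, hfactor]
  rw [Fintype.card_fin] at hbound
  -- the stated bound has slack `(n/4) tanh(2β‖h‖) e^{-4mt}`, absorbed since the sum is nonnegative
  linarith

/-- trace-norm bound for `X = (i/2)tanh(2βh)e^{−4q(4h)²cosh(2βh)t}`,
expressed through the eigenvalues `ε j` (with multiplicity) of the Hermitian matrix `h`:
`(1/2)‖X‖_Tr = ∑_j (1/4)|tanh(2βε_j)| e^{−4q(4ε_j)²cosh(2βε_j)t}
  ≤ (n/2) tanh(2β‖h‖) e^{−4 (min_j q(4ε_j)²cosh(2βε_j)) t}`.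
The trace norm of the normal matrix `X` is the sum of the absolute values of its
eigenvalues, which is supplied as the hypothesis `hτ`. -/
theorem trace_norm_mixing_bound {n : ℕ} (hn : 0 < n) (β t : ℝ) (hβ : 0 < β) (ht : 0 ≤ t)
    (q : ℝ → ℝ) (hq_cont : Continuous q)
    (ε : Fin n → ℝ)
    -- `hnorm = ‖h‖` is the largest absolute value of an eigenvalue
    (hnorm : ℝ) (hnorm_ge : ∀ j, |ε j| ≤ hnorm) (hnorm_mem : ∃ j, |ε j| = hnorm)
    -- `m = min_j q(4ε_j)² cosh(2βε_j)`
    (m : ℝ) (hm_le : ∀ j, m ≤ q (4 * ε j) ^ 2 * Real.cosh (2 * β * ε j))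
    (hm_mem : ∃ j, m = q (4 * ε j) ^ 2 * Real.cosh (2 * β * ε j))
    -- `τX = ‖X‖_Tr`: the trace norm of `X`, i.e. the sum of the absolute values of the
    -- eigenvalues `(i/2)tanh(2βε_j)e^{−4q(4ε_j)²cosh(2βε_j)t}` of the normal matrix `X`
    (τX : ℝ)
    (hτ : τX = ∑ j, ‖(Complex.I / 2) * (Real.tanh (2 * β * ε j) : ℂ) *
        (Real.exp (-4 * q (4 * ε j) ^ 2 * Real.cosh (2 * β * ε j) * t) : ℂ)‖) :
    (1 / 2) * τX
        = ∑ j, (1 / 4) * |Real.tanh (2 * β * ε j)| *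
            Real.exp (-4 * q (4 * ε j) ^ 2 * Real.cosh (2 * β * ε j) * t)
    ∧ (1 / 2) * τX
        ≤ (n / 2) * Real.tanh (2 * β * hnorm) * Real.exp (-4 * m * t) :=
  trace_norm_mixing_bound_general β t hβ ht q ε hnorm hnorm_ge m hm_le τX hτ
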